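/- arXiv:2008.10202 — 5 statements merged into one kernel-verified Lean document; each statement's English description precedes it below -/
import Mathlib

section
/- Let M be an ε-differentially private mechanism and S* a measurable invariant set with P(M(x) ∈ S*) > 0 for all x in the invariant-conforming set X*. Define the constrained mechanism M* by M*(x) ∼ M(x) | M(x) ∈ S*. Then for all pairs x, x' ∈ X* with d(x,x') = k (k-step neighbors), and for all measurable B, P(M*(x) ∈ B) ≤ exp(2kε) P(M*(x') ∈ B). -/
/-! Conditioning on `S*` divides the probability of `B ∩ S*` by that of `S*`. Group privacy bounds
the numerator at `x` by `exp (k ε)` times the numerator at `x'`, and, applied in the other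
direction, the denominator at `x'` by `exp (k ε)` times the denominator at `x`; the two factors
multiply to `exp (2 k ε)`. -/

open Function Real

section Hamming

variable {ι : Type*} [Fintype ι] [DecidableEq ι] {β : ι → Type*} [∀ i, DecidableEq (β i)]

theorem hammingDist_update_self_apply {x y : ∀ i, β i} {i : ι} (h : x i ≠ y i) :
    hammingDist x (update x i (y i)) = 1 := by
  rw [hammingDist, Finset.card_eq_one]
  refine ⟨i, Finset.ext fun j => ?_⟩
  rcases eq_or_ne j i with rfl | hj <;> simp [*]

theorem hammingDist_update_apply_add_one {x y : ∀ i, β i} {i : ι} (h : x i ≠ y i) :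
    hammingDist (update x i (y i)) y + 1 = hammingDist x y := by
  have hi : i ∈ Finset.univ.filter fun j => x j ≠ y j := by simpa using h
  have herase : (Finset.univ.filter fun j => update x i (y i) j ≠ y j) =
      (Finset.univ.filter fun j => x j ≠ y j).erase i := by
    ext j
    rcases eq_or_ne j i with rfl | hj <;> simp [*]
  rw [hammingDist, herase, Finset.card_erase_add_one hi, hammingDist]

theorem exists_hammingDist_eq_one_of_hammingDist_eq_succ {x y : ∀ i, β i} {k : ℕ}
    (h : hammingDist x y = k + 1) : ∃ z, hammingDist x z = 1 ∧ hammingDist z y = k := by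
  obtain ⟨i, hi⟩ : ∃ i, x i ≠ y i := by
    by_contra! hxy
    simp [funext hxy] at h
  exact ⟨update x i (y i), hammingDist_update_self_apply hi,
    by have := hammingDist_update_apply_add_one hi; omega⟩

theorem le_exp_hammingDist_mul_of_hammingDist_eq_one {f : (∀ i, β i) → ℝ} {ε : ℝ}
    (h : ∀ x y, hammingDist x y = 1 → f x ≤ exp ε * f y) (x y : ∀ i, β i) :
    f x ≤ exp (hammingDist x y * ε) * f y := by
  induction hxy : hammingDist x y generalizing x with
  | zero => simp [hammingDist_eq_zero.mp hxy]
  | succ k ih =>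
    obtain ⟨z, hxz, hzy⟩ := exists_hammingDist_eq_one_of_hammingDist_eq_succ hxy
    calc f x ≤ exp ε * f z := h x z hxz
      _ ≤ exp ε * (exp (k * ε) * f y) := by gcongr; exact ih z hzy
      _ = exp ((k + 1 : ℕ) * ε) * f y := by
        rw [← mul_assoc, ← exp_add]; push_cast; ring_nf

end Hamming

theorem div_le_sq_mul_div {a s a' s' c : ℝ} (hs : 0 < s) (hs' : 0 < s') (ha' : 0 ≤ a')
    (hc : 0 ≤ c) (ha : a ≤ c * a') (hs's : s' ≤ c * s) : a / s ≤ c ^ 2 * (a' / s') := by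
  rw [div_le_iff₀ hs]
  calc a ≤ c * a' * 1 := by rwa [mul_one]
    _ ≤ c * a' * (c * s / s') := by gcongr; exact (one_le_div hs').2 hs's
    _ = c ^ 2 * (a' / s') * s := by field_simp

theorem constrained_mechanism_two_eps_general
    {Ω : Type*} [DecidableEq Ω] {n : ℕ}
    {E : Type*} [MeasurableSpace E]
    (ε : ℝ)
    (P : (Fin n → Ω) → Set E → ℝ)
    (hP_nonneg : ∀ x B, 0 ≤ P x B)
    -- ε-differential privacy of the unconstrained mechanism M
    (hDP : ∀ x x' : Fin n → Ω,
      (Finset.univ.filter fun i => x i ≠ x' i).card = 1 →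
      ∀ B : Set E, MeasurableSet B → P x B ≤ Real.exp ε * P x' B)
    -- the invariant set S* and the conforming databases X*
    (Xstar : Set (Fin n → Ω)) (Sstar : Set E) (hSstar : MeasurableSet Sstar)
    (hpos : ∀ x ∈ Xstar, 0 < P x Sstar)
    (k : ℕ)
    (x x' : Fin n → Ω) (hx : x ∈ Xstar) (hx' : x' ∈ Xstar)
    (hk : (Finset.univ.filter fun i => x i ≠ x' i).card = k)
    (B : Set E) (hB : MeasurableSet B) :
    P x (B ∩ Sstar) / P x Sstar ≤
      Real.exp (2 * k * ε) * (P x' (B ∩ Sstar) / P x' Sstar) := by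
  have hdist : hammingDist x x' = k := hk
  have group_dp (B : Set E) (hB : MeasurableSet B) (y y' : Fin n → Ω) :
      P y B ≤ exp (hammingDist y y' * ε) * P y' B :=
    le_exp_hammingDist_mul_of_hammingDist_eq_one (fun y y' h => hDP y y' h B hB) y y'
  have hnum := group_dp (B ∩ Sstar) (hB.inter hSstar) x x'
  have hden := group_dp Sstar hSstar x' x
  rw [hammingDist_comm, hdist] at hden
  rw [hdist] at hnum
  have hexp : exp (2 * k * ε) = exp (k * ε) ^ 2 := by rw [sq, ← exp_add]; ring_nf
  rw [hexp]
  exact div_le_sq_mul_div (hpos x hx) (hpos x' hx') (hP_nonneg _ _) (exp_pos _).le hnum hden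

/-- the conditional (invariant-respecting) mechanism
`M*(x) ~ M(x) | M(x) ∈ S*` built from an ε-differentially private mechanism
satisfies a 2kε differential-privacy bound for pairs of invariant-conforming
databases at Hamming distance k. -/
theorem constrained_mechanism_two_eps
    {Ω : Type*} [Fintype Ω] [DecidableEq Ω] {n : ℕ}
    {E : Type*} [MeasurableSpace E]
    (ε : ℝ) (hε : 0 < ε)
    (P : (Fin n → Ω) → Set E → ℝ)
    (hP_nonneg : ∀ x B, 0 ≤ P x B)
    -- ε-differential privacy of the unconstrained mechanism M
    (hDP : ∀ x x' : Fin n → Ω,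
      (Finset.univ.filter fun i => x i ≠ x' i).card = 1 →
      ∀ B : Set E, MeasurableSet B → P x B ≤ Real.exp ε * P x' B)
    -- the invariant set S* and the conforming databases X*
    (Xstar : Set (Fin n → Ω)) (Sstar : Set E) (hSstar : MeasurableSet Sstar)
    (hpos : ∀ x ∈ Xstar, 0 < P x Sstar)
    (k : ℕ)
    (x x' : Fin n → Ω) (hx : x ∈ Xstar) (hx' : x' ∈ Xstar)
    (hk : (Finset.univ.filter fun i => x i ≠ x' i).card = k)
    (B : Set E) (hB : MeasurableSet B) :
    P x (B ∩ Sstar) / P x Sstar ≤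
      Real.exp (2 * k * ε) * (P x' (B ∩ Sstar) / P x' Sstar) :=
  constrained_mechanism_two_eps_general ε P hP_nonneg hDP Xstar Sstar hSstar hpos k x x' hx hx' hk B
    hB
end

section
/- Let u₁, u₂ be i.i.d. Laplace random variables with scale 2/ε, and let β ∈ (0,1) with β ≠ 1/2. Then the density of ũ = βu₁ + (1−β)u₂ is p(ũ) = [ε/(4(2β−1))]·[β·exp(−(ε/(2β))|ũ|) − (1−β)·exp(−(ε/(2(1−β)))|ũ|)], i.e., a signed (non-convex) mixture of Lap(2β/ε) and Lap(2(1−β)/ε) densities with weights β²/(2β−1) and −(1−β)²/(2β−1) summing to one. -/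
/-!
Given `u₂ = u`, the integrand is the `Lap(2β/ε)` density of `βu₁` at `z - (1-β)u` times the
`Lap(2/ε)` density of `u₂`. Rescaling `u` turns the integral into the convolution of the
`Lap(a)` and `Lap(b)` densities with `a = 2β/ε`, `b = 2(1-β)/ε`. Up to a constant this is
`∫ exp (-(p|z - v|) - q|v|) dv` with rates `p = 1/a`, `q = 1/b`; on each of `(-∞, 0]`, `[0, z]`,
`(z, ∞)` (for `z ≥ 0`) the exponent is affine in `v`, and summing the three elementary integrals
gives `(a² Lap_a(z) - b² Lap_b(z)) / (a² - b²)`, whose weights are `β²/(2β-1)` and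
`(1-β)²/(2β-1)`.
-/

open MeasureTheory Set Real

section ExpAbsKernel

variable {p q z : ℝ}

lemma exp_neg_abs_sub_sub_abs_eqOn_Iic (hz : 0 ≤ z) :
    EqOn (fun v ↦ rexp (-(p * |z - v|) - q * |v|))
      (fun v ↦ rexp (-(p * z)) * rexp ((p + q) * v)) (Iic 0) := by
  intro v (hv : v ≤ 0)
  dsimp only
  rw [← exp_add, abs_of_nonneg (by linarith), abs_of_nonpos hv]
  ring_nf

lemma exp_neg_abs_sub_sub_abs_eqOn_Icc :
    EqOn (fun v ↦ rexp (-(p * |z - v|) - q * |v|))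
      (fun v ↦ rexp (-(p * z)) * rexp ((p - q) * v)) (Icc 0 z) := by
  rintro v ⟨hv₀, hvz⟩
  dsimp only
  rw [← exp_add, abs_of_nonneg (by linarith), abs_of_nonneg hv₀]
  ring_nf

lemma exp_neg_abs_sub_sub_abs_eqOn_Ioi (hz : 0 ≤ z) :
    EqOn (fun v ↦ rexp (-(p * |z - v|) - q * |v|))
      (fun v ↦ rexp (p * z) * rexp (-(p + q) * v)) (Ioi z) := by
  intro v (hv : z < v)
  dsimp only
  rw [← exp_add, abs_of_neg (by linarith), abs_of_pos (by linarith)]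
  ring_nf

lemma integral_exp_mul {a b c : ℝ} (hc : c ≠ 0) :
    ∫ x in a..b, rexp (c * x) = (rexp (c * b) - rexp (c * a)) / c := by
  rw [intervalIntegral.integral_comp_mul_left (fun x ↦ rexp x) hc, integral_exp, smul_eq_mul,
    inv_mul_eq_div]

lemma integral_exp_neg_abs_sub_sub_abs_of_nonneg (hp : 0 < p) (hq : 0 < q) (hpq : p ≠ q)
    (hz : 0 ≤ z) :
    ∫ v, rexp (-(p * |z - v|) - q * |v|) =
      (2 * p * rexp (-(q * z)) - 2 * q * rexp (-(p * z))) / (p ^ 2 - q ^ 2) := by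
  set f := fun v ↦ rexp (-(p * |z - v|) - q * |v|)
  have hpq₀ : 0 < p + q := by linarith
  have hpq₁ : p - q ≠ 0 := sub_ne_zero.mpr hpq
  have hpq₂ : p ^ 2 - q ^ 2 ≠ 0 := by
    rw [sq_sub_sq]; exact mul_ne_zero hpq₀.ne' hpq₁
  have hleft : IntegrableOn f (Iic 0) :=
    IntegrableOn.congr_fun ((integrableOn_exp_mul_Iic hpq₀ 0).const_mul _)
      (exp_neg_abs_sub_sub_abs_eqOn_Iic hz).symm measurableSet_Iic
  have hmid : IntervalIntegrable f volume 0 z :=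
    (continuous_exp.comp (by fun_prop)).intervalIntegrable _ _
  have hright : IntegrableOn f (Ioi z) :=
    IntegrableOn.congr_fun ((integrableOn_exp_mul_Ioi (neg_lt_zero.2 hpq₀) z).const_mul _)
      (exp_neg_abs_sub_sub_abs_eqOn_Ioi hz).symm measurableSet_Ioi
  have hpos : IntegrableOn f (Ioi 0) := by
    rw [← Ioc_union_Ioi_eq_Ioi hz]
    exact ((intervalIntegrable_iff_integrableOn_Ioc_of_le hz).1 hmid).union hright
  rw [← intervalIntegral.integral_Iic_add_Ioi hleft hpos,
    ← intervalIntegral.integral_interval_add_Ioi' hmid hright,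
    setIntegral_congr_fun measurableSet_Iic (exp_neg_abs_sub_sub_abs_eqOn_Iic hz),
    intervalIntegral.integral_congr (uIcc_of_le hz ▸ exp_neg_abs_sub_sub_abs_eqOn_Icc),
    setIntegral_congr_fun measurableSet_Ioi (exp_neg_abs_sub_sub_abs_eqOn_Ioi hz),
    integral_const_mul, intervalIntegral.integral_const_mul, integral_const_mul,
    integral_exp_mul_Iic hpq₀, integral_exp_mul hpq₁, integral_exp_mul_Ioi (neg_lt_zero.2 hpq₀)]
  have h₁ : rexp ((p - q) * z) = rexp (p * z) * rexp (-(q * z)) := by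
    rw [← exp_add]; ring_nf
  have h₂ : rexp (-(p + q) * z) = (rexp (p * z))⁻¹ * rexp (-(q * z)) := by
    rw [← exp_neg, ← exp_add]; ring_nf
  rw [mul_zero, mul_zero, exp_zero, h₁, h₂, exp_neg (p * z)]
  field_simp
  ring

lemma integral_exp_neg_abs_sub_sub_abs (hp : 0 < p) (hq : 0 < q) (hpq : p ≠ q) (z : ℝ) :
    ∫ v, rexp (-(p * |z - v|) - q * |v|) =
      (2 * p * rexp (-(q * |z|)) - 2 * q * rexp (-(p * |z|))) / (p ^ 2 - q ^ 2) := by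
  rcases le_total 0 z with hz | hz
  · rw [abs_of_nonneg hz, integral_exp_neg_abs_sub_sub_abs_of_nonneg hp hq hpq hz]
  · rw [abs_of_nonpos hz, ← integral_exp_neg_abs_sub_sub_abs_of_nonneg hp hq hpq (neg_nonneg.2 hz),
      ← integral_neg_eq_self fun v ↦ rexp (-(p * |-z - v|) - q * |v|)]
    congr with v
    rw [neg_sub_neg, abs_sub_comm, abs_neg]

end ExpAbsKernel

noncomputable def laplacePDFReal (b x : ℝ) : ℝ := 1 / (2 * b) * rexp (-|x| / b)

lemma laplacePDFReal_mul_laplacePDFReal (a b z v : ℝ) :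
    laplacePDFReal a (z - v) * laplacePDFReal b v =
      (4 * a * b)⁻¹ * rexp (-(a⁻¹ * |z - v|) - b⁻¹ * |v|) := by
  simp only [laplacePDFReal, mul_mul_mul_comm, ← exp_add]
  ring_nf

lemma laplacePDFReal_comp_mul {c : ℝ} (hc : 0 < c) (b x : ℝ) :
    c * laplacePDFReal (c * b) (c * x) = laplacePDFReal b x := by
  simp only [laplacePDFReal, abs_mul, abs_of_pos hc]
  field_simp

theorem integral_laplacePDFReal_conv {a b : ℝ} (ha : 0 < a) (hb : 0 < b) (hab : a ≠ b) (z : ℝ) :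
    ∫ v, laplacePDFReal a (z - v) * laplacePDFReal b v =
      (a ^ 2 * laplacePDFReal a z - b ^ 2 * laplacePDFReal b z) / (a ^ 2 - b ^ 2) := by
  have hab₂ : a ^ 2 - b ^ 2 ≠ 0 := by
    rw [sq_sub_sq]; exact mul_ne_zero (by positivity) (sub_ne_zero.2 hab)
  have hba₂ : b ^ 2 - a ^ 2 ≠ 0 := by rwa [← neg_sub, neg_ne_zero]
  simp_rw [laplacePDFReal_mul_laplacePDFReal, integral_const_mul]
  rw [integral_exp_neg_abs_sub_sub_abs (inv_pos.2 ha) (inv_pos.2 hb) (inv_injective.ne hab)]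
  simp only [laplacePDFReal, ← inv_mul_eq_div]
  field_simp
  ring

lemma integral_mul_laplacePDFReal_comp_mul (g : ℝ → ℝ) {c : ℝ} (hc : 0 < c) (b z : ℝ) :
    ∫ u, g (z - c * u) * laplacePDFReal b u = ∫ v, g (z - v) * laplacePDFReal (c * b) v := by
  simp_rw [← laplacePDFReal_comp_mul hc b, mul_left_comm _ c, integral_const_mul]
  rw [Measure.integral_comp_mul_left (fun v ↦ g (z - v) * laplacePDFReal (c * b) v), smul_eq_mul,
    abs_of_pos (inv_pos.2 hc), mul_inv_cancel_left₀ hc.ne']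

lemma laplace_joint_density_eq {ε β : ℝ} (hε : ε ≠ 0) (hβ : β ≠ 0) (z u : ℝ) :
    ε ^ 2 / (16 * β) * rexp (-(ε / (2 * β)) * (|z - (1 - β) * u| + β * |u|)) =
      laplacePDFReal (2 * β / ε) (z - (1 - β) * u) * laplacePDFReal (2 / ε) u := by
  simp only [laplacePDFReal, mul_mul_mul_comm, ← exp_add]
  congr 1
  · field_simp; ring
  · congr 1; field_simp; ring

/-- density of ũ = βu₁ + (1-β)u₂ for u₁, u₂ i.i.d. Lap(2/ε) and
β ∈ (0,1), β ≠ 1/2: integrating the joint density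
p(ũ, u₂) = (ε²/(16β))exp(-(ε/(2β))[|ũ-(1-β)u₂| + β|u₂|]) over u₂ gives a signed
mixture of two Laplace densities. -/
theorem convex_combination_laplace_density
    (ε β : ℝ) (hε : 0 < ε) (hβ : β ∈ Set.Ioo (0 : ℝ) 1) (hβhalf : β ≠ 1 / 2)
    (z : ℝ) :
    (∫ u₂ : ℝ, (ε ^ 2 / (16 * β)) *
        Real.exp (-(ε / (2 * β)) * (|z - (1 - β) * u₂| + β * |u₂|))) =
      (ε / (4 * (2 * β - 1))) *
        (β * Real.exp (-(ε / (2 * β)) * |z|) -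
          (1 - β) * Real.exp (-(ε / (2 * (1 - β))) * |z|)) ∧
    (ε / (4 * (2 * β - 1))) *
        (β * Real.exp (-(ε / (2 * β)) * |z|) -
          (1 - β) * Real.exp (-(ε / (2 * (1 - β))) * |z|)) =
      (β ^ 2 / (2 * β - 1)) * ((1 / (2 * (2 * β / ε))) * Real.exp (-|z| / (2 * β / ε)))
        - ((1 - β) ^ 2 / (2 * β - 1)) *
            ((1 / (2 * (2 * (1 - β) / ε))) * Real.exp (-|z| / (2 * (1 - β) / ε))) := by
  obtain ⟨hβ₀, hβ₁⟩ := hβ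
  have hβ' : 0 < 1 - β := sub_pos.2 hβ₁
  have h2β : 2 * β - 1 ≠ 0 := fun h ↦ hβhalf (by linarith)
  have hmix : ε / (4 * (2 * β - 1)) *
        (β * rexp (-(ε / (2 * β)) * |z|) - (1 - β) * rexp (-(ε / (2 * (1 - β))) * |z|)) =
      β ^ 2 / (2 * β - 1) * laplacePDFReal (2 * β / ε) z -
        (1 - β) ^ 2 / (2 * β - 1) * laplacePDFReal (2 * (1 - β) / ε) z := by
    simp only [laplacePDFReal, div_div_eq_mul_div, mul_comm _ |z|]
    field_simp
    ring
  refine ⟨?_, hmix⟩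
  have ha : 0 < 2 * β / ε := by positivity
  have hb : 0 < 2 * (1 - β) / ε := by positivity
  have hab : 2 * β / ε ≠ 2 * (1 - β) / ε := fun h ↦ hβhalf (by field_simp at h; linarith)
  simp_rw [hmix, laplace_joint_density_eq hε.ne' hβ₀.ne',
    integral_mul_laplacePDFReal_comp_mul (laplacePDFReal (2 * β / ε)) hβ',
    show (1 - β) * (2 / ε) = 2 * (1 - β) / ε by ring, integral_laplacePDFReal_conv ha hb hab]
  have hden : (2 * β / ε) ^ 2 - (2 * (1 - β) / ε) ^ 2 = 4 * (2 * β - 1) / ε ^ 2 := by ring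
  generalize laplacePDFReal (2 * β / ε) z = x
  generalize laplacePDFReal (2 * (1 - β) / ε) z = y
  rw [hden]
  field_simp
  ring
end

section
/- The density p_ε(x) = (ε/4)(1 + ε|x|)exp(−ε|x|) on ℝ (the density of the average of two i.i.d. Lap(2/ε) variables) satisfies: for all a, b ∈ ℝ, sup_x p_ε(x−a)/p_ε(x−b) ≤ exp(ε|a−b|). Consequently the additive mechanism M(s) = s + ũ with ũ having density p_ε, applied to a query with sensitivity |s(x)−s(x')| ≤ 1 on neighbors, is ε-differentially private. -/
/-!
Write `p_ε(x) = (ε/4) f(|x|)` with `f(t) = (1 + ε t) e^{-ε t}`. Since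
`1 + ε t ≤ (1 + ε s)(1 + ε (t - s)) ≤ (1 + ε s) e^{ε (t - s)}` for `0 ≤ s ≤ t`, `f` is decreasing,
while `f(t) e^{ε t} = 1 + ε t` is increasing. So `f(|x|) ≤ f(|y|)` when `|y| ≤ |x|`, and
`f(|x|) ≤ e^{ε (|y| - |x|)} f(|y|)` when `|x| ≤ |y|`; either way `p_ε(x) ≤ e^{ε |x - y|} p_ε(y)`,
and integrating this pointwise bound over a measurable set gives the privacy inequality.
-/

open MeasureTheory Set Real

noncomputable def avgLaplacePDF (ε x : ℝ) : ℝ := ε / 4 * (1 + ε * |x|) * exp (-ε * |x|)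

section Pointwise

variable {ε : ℝ}

theorem avgLaplacePDF_nonneg (hε : 0 ≤ ε) (x : ℝ) : 0 ≤ avgLaplacePDF ε x := by
  unfold avgLaplacePDF; positivity

theorem avgLaplacePDF_pos (hε : 0 < ε) (x : ℝ) : 0 < avgLaplacePDF ε x := by
  unfold avgLaplacePDF; positivity

theorem avgLaplacePDF_le_of_abs_le (hε : 0 ≤ ε) {x y : ℝ} (h : |y| ≤ |x|) :
    avgLaplacePDF ε x ≤ avgLaplacePDF ε y := by
  have hgap : 0 ≤ ε * (|x| - |y|) := mul_nonneg hε (sub_nonneg.2 h)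
  have hgrowth : 1 + ε * |x| ≤ (1 + ε * |y|) * exp (ε * (|x| - |y|)) :=
    calc 1 + ε * |x| ≤ (1 + ε * |y|) * (ε * (|x| - |y|) + 1) := by
          nlinarith [mul_nonneg (mul_nonneg hε (abs_nonneg y)) hgap]
      _ ≤ (1 + ε * |y|) * exp (ε * (|x| - |y|)) := by
          gcongr
          exact add_one_le_exp _
  unfold avgLaplacePDF
  calc ε / 4 * (1 + ε * |x|) * exp (-ε * |x|)
      ≤ ε / 4 * ((1 + ε * |y|) * exp (ε * (|x| - |y|))) * exp (-ε * |x|) := by gcongr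
    _ = ε / 4 * (1 + ε * |y|) * exp (-ε * |y|) := by
        rw [mul_assoc (ε / 4), mul_assoc, mul_assoc, ← exp_add, ← mul_assoc]
        ring_nf

theorem avgLaplacePDF_le_exp_mul_of_abs_le (hε : 0 ≤ ε) {x y : ℝ} (h : |x| ≤ |y|) :
    avgLaplacePDF ε x ≤ exp (ε * (|y| - |x|)) * avgLaplacePDF ε y := by
  unfold avgLaplacePDF
  calc ε / 4 * (1 + ε * |x|) * exp (-ε * |x|) ≤ ε / 4 * (1 + ε * |y|) * exp (-ε * |x|) := by
        gcongr
    _ = exp (ε * (|y| - |x|)) * (ε / 4 * (1 + ε * |y|) * exp (-ε * |y|)) := by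
        rw [mul_left_comm, ← exp_add]
        ring_nf

theorem avgLaplacePDF_le_exp_mul (hε : 0 ≤ ε) (x y : ℝ) :
    avgLaplacePDF ε x ≤ exp (ε * |x - y|) * avgLaplacePDF ε y := by
  rcases le_total |x| |y| with h | h
  · refine (avgLaplacePDF_le_exp_mul_of_abs_le hε h).trans ?_
    refine mul_le_mul_of_nonneg_right ?_ (avgLaplacePDF_nonneg hε y)
    gcongr
    rw [abs_sub_comm]
    exact abs_sub_abs_le_abs_sub y x
  · exact (avgLaplacePDF_le_of_abs_le hε h).trans
      (le_mul_of_one_le_left (avgLaplacePDF_nonneg hε y) (one_le_exp (by positivity)))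

theorem avgLaplacePDF_sub_le_exp_mul (hε : 0 ≤ ε) (a b x : ℝ) :
    avgLaplacePDF ε (x - a) ≤ exp (ε * |a - b|) * avgLaplacePDF ε (x - b) := by
  simpa only [sub_sub_sub_cancel_left, abs_sub_comm b a] using
    avgLaplacePDF_le_exp_mul hε (x - a) (x - b)

end Pointwise

theorem integrable_comp_abs_of_integrableOn_Ioi {E : Type*} [NormedAddCommGroup E] {f : ℝ → E}
    (hf : IntegrableOn f (Ioi 0)) : Integrable fun x => f |x| := by
  have hIoi : IntegrableOn (fun x => f |x|) (Ioi 0) :=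
    hf.congr_fun (fun x hx => by rw [abs_of_pos hx]) measurableSet_Ioi
  have hIic : IntegrableOn (fun x => f |x|) (Iic 0) := by
    have hneg : MeasurableEmbedding fun x : ℝ => -x := (Homeomorph.neg ℝ).measurableEmbedding
    rw [← Measure.map_neg_eq_self (volume : Measure ℝ), hneg.integrableOn_map_iff]
    simp_rw [Function.comp_def, abs_neg, neg_preimage, neg_Iic, neg_zero]
    exact (integrableOn_Ici_iff_integrableOn_Ioi).mpr hIoi
  rw [← integrableOn_univ, ← Iic_union_Ioi (a := (0 : ℝ))]
  exact hIic.union hIoi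

theorem integrable_avgLaplacePDF {ε : ℝ} (hε : 0 < ε) : Integrable (avgLaplacePDF ε) := by
  have hexp : IntegrableOn (fun t => exp (-ε * t)) (Ioi 0) := exp_neg_integrableOn_Ioi 0 hε
  have hmul : IntegrableOn (fun t => t * exp (-ε * t)) (Ioi 0) := by
    simpa only [rpow_one] using
      integrableOn_rpow_mul_exp_neg_mul_rpow (s := 1) (p := 1) (by norm_num) one_pos hε
  have hIoi : IntegrableOn (fun t => ε / 4 * (1 + ε * t) * exp (-ε * t)) (Ioi 0) :=
    IntegrableOn.congr_fun ((hexp.const_mul (ε / 4)).add (hmul.const_mul (ε / 4 * ε)))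
      (fun t _ => by simp only [Pi.add_apply]; ring) measurableSet_Ioi
  exact integrable_comp_abs_of_integrableOn_Ioi hIoi

theorem setIntegral_avgLaplacePDF_sub_le {ε : ℝ} (hε : 0 < ε) (a b : ℝ) {B : Set ℝ}
    (hB : MeasurableSet B) :
    ∫ m in B, avgLaplacePDF ε (m - a) ≤ exp (ε * |a - b|) * ∫ m in B, avgLaplacePDF ε (m - b) := by
  rw [← integral_const_mul]
  refine setIntegral_mono_on ((integrable_avgLaplacePDF hε).comp_sub_right a).integrableOn
    (((integrable_avgLaplacePDF hε).comp_sub_right b).const_mul _).integrableOn hB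
    (fun m _ => avgLaplacePDF_sub_le_exp_mul hε.le a b m)

/-- the density p_ε(x) = (ε/4)(1+ε|x|)exp(-ε|x|) of the average of
two i.i.d. Lap(2/ε) variables satisfies the ratio bound
p_ε(x-a)/p_ε(x-b) ≤ exp(ε|a-b|); consequently the additive mechanism
M(x) = s(x) + ũ with a sensitivity-1 query is ε-differentially private. -/
theorem average_laplace_mechanism_DP
    (ε : ℝ) (hε : 0 < ε) :
    (∀ a b x : ℝ,
      ((ε / 4) * (1 + ε * |x - a|) * Real.exp (-ε * |x - a|)) /
          ((ε / 4) * (1 + ε * |x - b|) * Real.exp (-ε * |x - b|)) ≤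
        Real.exp (ε * |a - b|)) ∧
    ∀ {X : Type} (neighbor : X → X → Prop) (s : X → ℝ),
      (∀ x x', neighbor x x' → |s x - s x'| ≤ 1) →
      ∀ x x', neighbor x x' → ∀ B : Set ℝ, MeasurableSet B →
        (∫ m in B, (ε / 4) * (1 + ε * |m - s x|) * Real.exp (-ε * |m - s x|)) ≤
          Real.exp ε *
            ∫ m in B, (ε / 4) * (1 + ε * |m - s x'|) * Real.exp (-ε * |m - s x'|) := by
  refine ⟨fun a b x => ?_, fun neighbor s hs x x' hxx' B hB => ?_⟩
  · exact (div_le_iff₀ (avgLaplacePDF_pos hε (x - b))).2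
      (avgLaplacePDF_sub_le_exp_mul hε.le a b x)
  · have hsens : ε * |s x - s x'| ≤ ε := mul_le_of_le_one_right hε.le (hs x x' hxx')
    calc ∫ m in B, avgLaplacePDF ε (m - s x)
        ≤ exp (ε * |s x - s x'|) * ∫ m in B, avgLaplacePDF ε (m - s x') :=
          setIntegral_avgLaplacePDF_sub_le hε _ _ hB
      _ ≤ exp ε * ∫ m in B, avgLaplacePDF ε (m - s x') := by
          gcongr
          exact setIntegral_nonneg hB fun m _ => avgLaplacePDF_nonneg hε.le _
end

section
/- For the density p_ε(x) = (ε/4)(1 + ε|x|)exp(−ε|x|), the privacy bound exp(ε|a−b|) is tight: for any fixed a ≠ b, lim_{|x|→∞} [p_ε(x−a)e^{ε|x−a|}]/[p_ε(x−b)e^{ε|x−b|}] = 1, hence sup_x p_ε(x−a)/p_ε(x−b) = exp(ε|a−b|). -/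
open Filter Topology

/-!
Write `u = ε|x - a|` and `v = ε|x - b|`. Then `p_ε(x - a) e^{u} / (p_ε(x - b) e^{v}) = (1 + u)/(1 + v)`,
and since `|u - v| ≤ ε|a - b|` stays bounded while `v → ∞`, this tends to `1`. Hence
`p_ε(x - a)/p_ε(x - b) = (1 + u)/(1 + v) · e^{v - u}` behaves like `e^{v - u}`, and `v - u = ε|a - b|`
for all `x` far enough out on the side of the smaller of `a`, `b`. The upper bound
`p_ε(y) ≤ p_ε(z) e^{ε|y - z|}` comes from `(1 + s)e^{-s}` being decreasing on `[0, ∞)`.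
-/

lemma ciSup_eq_of_forall_le_of_tendsto {ι α : Type*} [ConditionallyCompleteLattice α]
    [TopologicalSpace α] [ClosedIicTopology α] {f : ι → α} {c : α} {l : Filter ι} [l.NeBot]
    (hle : ∀ i, f i ≤ c) (hf : Tendsto f l (𝓝 c)) : ⨆ i, f i = c :=
  have : Nonempty ι := l.nonempty_of_neBot
  le_antisymm (ciSup_le hle) (le_of_tendsto' hf fun i => le_ciSup ⟨c, Set.forall_mem_range.2 hle⟩ i)

lemma tendsto_one_add_div_one_add_of_abs_sub_le {α : Type*} {l : Filter α} {u v : α → ℝ}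
    {d : ℝ} (hv : Tendsto v l atTop) (huv : ∀ x, |u x - v x| ≤ d) :
    Tendsto (fun x => (1 + u x) / (1 + v x)) l (𝓝 1) := by
  have hv₁ : Tendsto (fun x => 1 + v x) l atTop := tendsto_atTop_add_const_left l 1 hv
  have hsmall : Tendsto (fun x => (1 + v x)⁻¹ * (u x - v x)) l (𝓝 0) :=
    hv₁.inv_tendsto_atTop.zero_mul_isBoundedUnder_le (isBoundedUnder_of ⟨d, huv⟩)
  refine (add_zero (1 : ℝ) ▸ hsmall.const_add 1).congr' ?_
  filter_upwards [hv₁.eventually_gt_atTop 0] with x hx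
  field_simp
  ring

lemma tendsto_abs_sub_atTop {l : Filter ℝ} (hl : Tendsto abs l atTop) (b : ℝ) :
    Tendsto (fun x => |x - b|) l atTop :=
  tendsto_atTop_mono (fun x => abs_sub_abs_le_abs_sub x b) (tendsto_atTop_add_const_right l _ hl)

lemma abs_abs_sub_sub_abs_sub_le (x a b : ℝ) : |(|x - a| - |x - b|)| ≤ |a - b| := by
  simpa [abs_sub_comm b a] using abs_abs_sub_abs_le_abs_sub (x - a) (x - b)

lemma tendsto_one_add_mul_abs_sub_div {ε : ℝ} (hε : 0 < ε) {l : Filter ℝ}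
    (hl : Tendsto abs l atTop) (a b : ℝ) :
    Tendsto (fun x => (1 + ε * |x - a|) / (1 + ε * |x - b|)) l (𝓝 1) := by
  refine tendsto_one_add_div_one_add_of_abs_sub_le
    ((tendsto_abs_sub_atTop hl b).const_mul_atTop hε) (d := ε * |a - b|) fun x => ?_
  rw [← mul_sub, abs_mul, abs_of_pos hε]
  exact mul_le_mul_of_nonneg_left (abs_abs_sub_sub_abs_sub_le x a b) hε.le

lemma eventually_abs_sub_sub_abs_sub_atTop (a b : ℝ) :
    ∀ᶠ x in atTop, |x - b| - |x - a| = a - b := by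
  filter_upwards [eventually_ge_atTop a, eventually_ge_atTop b] with x ha hb
  rw [abs_of_nonneg (sub_nonneg.2 ha), abs_of_nonneg (sub_nonneg.2 hb)]
  ring

lemma eventually_abs_sub_sub_abs_sub_atBot (a b : ℝ) :
    ∀ᶠ x in atBot, |x - b| - |x - a| = b - a := by
  filter_upwards [eventually_le_atBot a, eventually_le_atBot b] with x ha hb
  rw [abs_of_nonpos (sub_nonpos.2 ha), abs_of_nonpos (sub_nonpos.2 hb)]
  ring

lemma one_add_mul_exp_neg_le {s t : ℝ} (ht : 0 ≤ t) :
    (1 + s) * Real.exp (-s) ≤ (1 + t) * Real.exp (-t) * Real.exp |s - t| := by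
  rcases le_total s t with hst | hts
  · rw [abs_of_nonpos (sub_nonpos.2 hst), mul_assoc, ← Real.exp_add, show -t + -(s - t) = -s by ring]
    gcongr
  · have hdecr : (1 + s) * Real.exp (-s) ≤ (1 + t) * Real.exp (-t) := by
      have hlin : 1 + s ≤ (1 + t) * Real.exp (s - t) := by
        nlinarith [Real.add_one_le_exp (s - t), mul_nonneg ht (sub_nonneg.2 hts)]
      calc (1 + s) * Real.exp (-s) ≤ (1 + t) * Real.exp (s - t) * Real.exp (-s) := by gcongr
        _ = (1 + t) * Real.exp (-t) := by rw [mul_assoc, ← Real.exp_add]; ring_nf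
    exact hdecr.trans (le_mul_of_one_le_right (by positivity) (Real.one_le_exp (abs_nonneg _)))

/-- The density of the sum of two independent Laplace variables of scale `1/ε`. -/
noncomputable def averageLaplacePDF (ε x : ℝ) : ℝ :=
  ε / 4 * (1 + ε * |x|) * Real.exp (-ε * |x|)

namespace averageLaplacePDF

variable {ε : ℝ}

lemma pos (hε : 0 < ε) (x : ℝ) : 0 < averageLaplacePDF ε x := by
  unfold averageLaplacePDF
  positivity

lemma mul_exp (ε x : ℝ) : averageLaplacePDF ε x * Real.exp (ε * |x|) = ε / 4 * (1 + ε * |x|) := by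
  rw [averageLaplacePDF, mul_assoc, ← Real.exp_add, neg_mul, neg_add_cancel, Real.exp_zero, mul_one]

lemma div_eq (hε : ε ≠ 0) (y z : ℝ) : averageLaplacePDF ε y / averageLaplacePDF ε z =
    (1 + ε * |y|) / (1 + ε * |z|) * Real.exp (ε * (|z| - |y|)) := by
  rw [averageLaplacePDF, averageLaplacePDF, mul_assoc, mul_assoc,
    mul_div_mul_left _ _ (by positivity), mul_div_mul_comm, ← Real.exp_sub]
  ring_nf

lemma le_mul_exp (hε : 0 ≤ ε) (y z : ℝ) :
    averageLaplacePDF ε y ≤ averageLaplacePDF ε z * Real.exp (ε * |y - z|) := by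
  have hdiff : |(ε * |y| - ε * |z|)| ≤ ε * |y - z| := by
    rw [← mul_sub, abs_mul, abs_of_nonneg hε]
    exact mul_le_mul_of_nonneg_left (abs_abs_sub_abs_le_abs_sub y z) hε
  have hkey := one_add_mul_exp_neg_le (s := ε * |y|) (mul_nonneg hε (abs_nonneg z))
  calc averageLaplacePDF ε y = ε / 4 * ((1 + ε * |y|) * Real.exp (-(ε * |y|))) := by
        rw [averageLaplacePDF, neg_mul, mul_assoc]
    _ ≤ ε / 4 * ((1 + ε * |z|) * Real.exp (-(ε * |z|)) * Real.exp (ε * |y - z|)) := by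
        gcongr ε / 4 * ?_
        exact hkey.trans (by gcongr)
    _ = averageLaplacePDF ε z * Real.exp (ε * |y - z|) := by
        rw [averageLaplacePDF, neg_mul, mul_assoc (ε / 4), mul_assoc (ε / 4)]

lemma div_le_exp (hε : 0 < ε) (x a b : ℝ) :
    averageLaplacePDF ε (x - a) / averageLaplacePDF ε (x - b) ≤ Real.exp (ε * |a - b|) := by
  rw [div_le_iff₀ (pos hε _), mul_comm, abs_sub_comm a b, ← sub_sub_sub_cancel_left a b x]
  exact le_mul_exp hε.le _ _

lemma tendsto_mul_exp_div {l : Filter ℝ} (hε : 0 < ε) (hl : Tendsto abs l atTop) (a b : ℝ) :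
    Tendsto (fun x => averageLaplacePDF ε (x - a) * Real.exp (ε * |x - a|) /
      (averageLaplacePDF ε (x - b) * Real.exp (ε * |x - b|))) l (𝓝 1) := by
  refine (tendsto_one_add_mul_abs_sub_div hε hl a b).congr fun x => ?_
  rw [mul_exp, mul_exp, mul_div_mul_left _ _ (by positivity)]

lemma tendsto_div {l : Filter ℝ} (hε : 0 < ε) (hl : Tendsto abs l atTop) {a b c : ℝ}
    (hc : ∀ᶠ x in l, |x - b| - |x - a| = c) :
    Tendsto (fun x => averageLaplacePDF ε (x - a) / averageLaplacePDF ε (x - b)) l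
      (𝓝 (Real.exp (ε * c))) := by
  refine (one_mul (Real.exp (ε * c)) ▸
    (tendsto_one_add_mul_abs_sub_div hε hl a b).mul_const _).congr' ?_
  filter_upwards [hc] with x hx
  rw [div_eq hε.ne', hx]

end averageLaplacePDF

theorem average_laplace_bound_tight_general
    (ε : ℝ) (hε : 0 < ε) (a b : ℝ) :
    Tendsto
      (fun x : ℝ =>
        (((ε / 4) * (1 + ε * |x - a|) * Real.exp (-ε * |x - a|)) *
            Real.exp (ε * |x - a|)) /
          (((ε / 4) * (1 + ε * |x - b|) * Real.exp (-ε * |x - b|)) *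
            Real.exp (ε * |x - b|)))
      (Filter.comap (fun x : ℝ => |x|) Filter.atTop) (nhds 1) ∧
    (⨆ x : ℝ,
        ((ε / 4) * (1 + ε * |x - a|) * Real.exp (-ε * |x - a|)) /
          ((ε / 4) * (1 + ε * |x - b|) * Real.exp (-ε * |x - b|))) =
      Real.exp (ε * |a - b|) := by
  refine ⟨averageLaplacePDF.tendsto_mul_exp_div hε tendsto_comap a b, ?_⟩
  have hle := (averageLaplacePDF.div_le_exp hε · a b)
  rcases le_total a b with hab | hba
  · refine ciSup_eq_of_forall_le_of_tendsto (l := atBot) hle ?_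
    rw [abs_of_nonpos (sub_nonpos.2 hab), neg_sub]
    exact averageLaplacePDF.tendsto_div hε tendsto_abs_atBot_atTop
      (eventually_abs_sub_sub_abs_sub_atBot a b)
  · refine ciSup_eq_of_forall_le_of_tendsto (l := atTop) hle ?_
    rw [abs_of_nonneg (sub_nonneg.2 hba)]
    exact averageLaplacePDF.tendsto_div hε tendsto_abs_atTop_atTop
      (eventually_abs_sub_sub_abs_sub_atTop a b)

/-- tightness of the bound exp(ε|a-b|) for
p_ε(x) = (ε/4)(1+ε|x|)exp(-ε|x|): the ratio of g_ε(x) = p_ε(x)e^{ε|x|} at x-a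
and x-b tends to 1 as |x| → ∞, and the supremum of p_ε(x-a)/p_ε(x-b) over x
equals exp(ε|a-b|). -/
theorem average_laplace_bound_tight
    (ε : ℝ) (hε : 0 < ε) (a b : ℝ) (hab : a ≠ b) :
    Tendsto
      (fun x : ℝ =>
        (((ε / 4) * (1 + ε * |x - a|) * Real.exp (-ε * |x - a|)) *
            Real.exp (ε * |x - a|)) /
          (((ε / 4) * (1 + ε * |x - b|) * Real.exp (-ε * |x - b|)) *
            Real.exp (ε * |x - b|)))
      (Filter.comap (fun x : ℝ => |x|) Filter.atTop) (nhds 1) ∧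
    (⨆ x : ℝ,
        ((ε / 4) * (1 + ε * |x - a|) * Real.exp (-ε * |x - a|)) /
          ((ε / 4) * (1 + ε * |x - b|) * Real.exp (-ε * |x - b|))) =
      Real.exp (ε * |a - b|) :=
  average_laplace_bound_tight_general ε hε a b
end

section
/- Let β ∈ (1/2, 1) and let p_ε be the density of ũ = βu₁ + (1−β)u₂ where u₁, u₂ are i.i.d. Lap(2/ε). Then g(x) = p_ε(x)·exp((ε/(2β))|x|) is monotone increasing in |x|, and p_ε(x) is monotone decreasing in |x|; consequently sup_x p_ε(x−a)/p_ε(x−b) ≤ exp((ε/(2β))|a−b|) for all a, b ∈ ℝ. -/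
/-!
Write `p x = C · q |x|` with `q t = β e^{-αt} - (1-β) e^{-γt}`, `α = ε/(2β) < γ = ε/(2(1-β))`.
Then `q t · e^{αt} = β - (1-β) e^{(α-γ)t}` is increasing, and `q` is decreasing on `[0, ∞)`
because `βα = (1-β)γ` makes `q' t = βα (e^{-γt} - e^{-αt}) ≤ 0`. For a positive `f` with these
two properties, `f u / f v` is at most `e^{α(|v| - |u|)}` when `|u| ≤ |v|` and at most `1`
otherwise, hence at most `e^{α|u - v|}`.
-/

open Real Set

theorem div_le_exp_mul_abs_sub_of_abs_monotone {f : ℝ → ℝ} {α : ℝ} (hα : 0 ≤ α)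
    (hpos : ∀ x, 0 < f x) (hanti : ∀ x y, |y| ≤ |x| → f x ≤ f y)
    (hmono : ∀ x y, |x| ≤ |y| → f x * exp (α * |x|) ≤ f y * exp (α * |y|)) (u v : ℝ) :
    f u / f v ≤ exp (α * |u - v|) := by
  rw [div_le_iff₀ (hpos v)]
  rcases le_total |u| |v| with huv | hvu
  · have hu : f u ≤ f v * exp (α * (|v| - |u|)) := by
      rw [mul_sub, exp_sub, mul_div_assoc', le_div_iff₀ (exp_pos _)]
      exact hmono u v huv
    calc f u ≤ f v * exp (α * (|v| - |u|)) := hu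
      _ ≤ f v * exp (α * |u - v|) := by
        have hdist : |v| - |u| ≤ |u - v| := abs_sub_comm u v ▸ abs_sub_abs_le_abs_sub v u
        gcongr
        exact (hpos v).le
      _ = exp (α * |u - v|) * f v := mul_comm _ _
  · calc f u ≤ f v := hanti u v hvu
      _ ≤ exp (α * |u - v|) * f v :=
        le_mul_of_one_le_left (hpos v).le (one_le_exp (by positivity))

section ExpDifference

variable {a b α γ : ℝ}

theorem mul_exp_sub_mul_exp_mul_exp (t : ℝ) :
    (a * exp (-α * t) - b * exp (-γ * t)) * exp (α * t) = a - b * exp ((α - γ) * t) := by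
  rw [sub_mul, mul_assoc, mul_assoc, ← exp_add, ← exp_add]
  ring_nf
  rw [exp_zero, mul_one]

theorem monotone_mul_exp_sub_mul_exp_mul_exp (hb : 0 ≤ b) (hαγ : α ≤ γ) :
    Monotone fun t => (a * exp (-α * t) - b * exp (-γ * t)) * exp (α * t) := by
  intro s t hst
  simp only [mul_exp_sub_mul_exp_mul_exp]
  exact sub_le_sub_left (mul_le_mul_of_nonneg_left (exp_le_exp.mpr (by nlinarith)) hb) a

theorem mul_exp_sub_mul_exp_pos (hb : 0 ≤ b) (hba : b < a) (hαγ : α ≤ γ) {t : ℝ}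
    (ht : 0 ≤ t) : 0 < a * exp (-α * t) - b * exp (-γ * t) := by
  refine sub_pos.mpr ?_
  calc b * exp (-γ * t) ≤ b * exp (-α * t) :=
        mul_le_mul_of_nonneg_left (exp_le_exp.mpr (by nlinarith)) hb
    _ < a * exp (-α * t) := mul_lt_mul_of_pos_right hba (exp_pos _)

theorem antitoneOn_mul_exp_sub_mul_exp (hαγ : α ≤ γ) (hab : a * α = b * γ) (ha : 0 ≤ a * α) :
    AntitoneOn (fun t => a * exp (-α * t) - b * exp (-γ * t)) (Ici 0) := by
  have hderiv : ∀ t, HasDerivAt (fun t => a * exp (-α * t) - b * exp (-γ * t))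
      (a * α * (exp (-γ * t) - exp (-α * t))) t := by
    intro t
    refine (((hasDerivAt_id t).const_mul (-α)).exp.const_mul a).sub
      (((hasDerivAt_id t).const_mul (-γ)).exp.const_mul b) |>.congr_deriv ?_
    simp only [id_eq]
    linear_combination (-exp (-γ * t)) * hab
  apply antitoneOn_of_deriv_nonpos (convex_Ici 0)
  · exact fun t _ => (hderiv t).continuousAt.continuousWithinAt
  · exact fun t _ => (hderiv t).differentiableAt.differentiableWithinAt
  · intro t ht
    rw [interior_Ici, mem_Ioi] at ht
    rw [(hderiv t).deriv]
    exact mul_nonpos_of_nonneg_of_nonpos ha (sub_nonpos.mpr (exp_le_exp.mpr (by nlinarith)))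

end ExpDifference

/-- for β ∈ (1/2, 1), the density
p_ε(x) = [ε/(4(2β-1))]·[β·e^{-(ε/(2β))|x|} - (1-β)·e^{-(ε/(2(1-β)))|x|}] of
βu₁+(1-β)u₂ is decreasing in |x|, g(x) = p_ε(x)e^{(ε/(2β))|x|} is increasing in
|x|, and hence p_ε(x-a)/p_ε(x-b) ≤ exp((ε/(2β))|a-b|). -/
theorem convex_laplace_DP_bound
    (ε β : ℝ) (hε : 0 < ε) (hβ : β ∈ Set.Ioo (1 / 2 : ℝ) 1) :
    let p : ℝ → ℝ := fun x =>
      (ε / (4 * (2 * β - 1))) *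
        (β * Real.exp (-(ε / (2 * β)) * |x|) -
          (1 - β) * Real.exp (-(ε / (2 * (1 - β))) * |x|))
    (∀ x y : ℝ, |x| ≤ |y| →
        p x * Real.exp ((ε / (2 * β)) * |x|) ≤
          p y * Real.exp ((ε / (2 * β)) * |y|)) ∧
    (∀ x y : ℝ, |y| ≤ |x| → p x ≤ p y) ∧
    ∀ a b x : ℝ, p (x - a) / p (x - b) ≤ Real.exp ((ε / (2 * β)) * |a - b|) := by
  obtain ⟨hβ₁, hβ₂⟩ := hβ
  intro p
  have hC : 0 < ε / (4 * (2 * β - 1)) := div_pos hε (by linarith)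
  have hα : 0 ≤ ε / (2 * β) := by positivity
  have hαγ : ε / (2 * β) ≤ ε / (2 * (1 - β)) :=
    div_le_div_of_nonneg_left hε.le (by linarith) (by linarith)
  have hβα : β * (ε / (2 * β)) = (1 - β) * (ε / (2 * (1 - β))) := by
    field_simp [show 1 - β ≠ 0 by linarith]
  have hmono : ∀ x y : ℝ, |x| ≤ |y| →
      p x * exp (ε / (2 * β) * |x|) ≤ p y * exp (ε / (2 * β) * |y|) := fun x y hxy => by
    simp only [p, mul_assoc]
    gcongr ?_ * ?_
    exact monotone_mul_exp_sub_mul_exp_mul_exp (by linarith) hαγ hxy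
  have hanti : ∀ x y : ℝ, |y| ≤ |x| → p x ≤ p y := fun x y hxy => by
    simp only [p]
    gcongr ?_ * ?_
    exact antitoneOn_mul_exp_sub_mul_exp hαγ hβα (by positivity)
      (abs_nonneg y) (abs_nonneg x) hxy
  have hpos : ∀ x, 0 < p x := fun x =>
    mul_pos hC (mul_exp_sub_mul_exp_pos (by linarith) (by linarith) hαγ (abs_nonneg x))
  refine ⟨hmono, hanti, fun a b x => ?_⟩
  have h := div_le_exp_mul_abs_sub_of_abs_monotone hα hpos hanti hmono (x - a) (x - b)
  rwa [sub_sub_sub_cancel_left, abs_sub_comm] at h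
end
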